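/- arXiv:0808.2382 — 2 statements merged into one kernel-verified Lean document; each statement's English description precedes it below -/
import Mathlib

section
/- Let $n \ge 1$ and let $A_{Q_n}$ be the adjacency matrix of the hypercube $Q_n$. The continuous-time quantum walk $\psi_t = \exp(-itA_{Q_n})\delta_{0_n}$ starting at the vertex $0_n$ is instantaneous uniform mixing at time $t^\star = \pi/4$: $|\psi_{\pi/4}(v)|^2 = 2^{-n}$ for every vertex $v \in \mathbb{Z}_2^n$. -/
open Matrix Complex Finset Kronecker

/-- Hamming weight of a vector in `(ZMod 2)^n`. -/
def wt {n : ℕ} (x : Fin n → ZMod 2) : ℕ := (Finset.univ.filter fun i => x i = 1).card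

/-- Inner product modulo 2. -/
def dot {n : ℕ} (a x : Fin n → ZMod 2) : ZMod 2 := ∑ i, a i * x i

/-- Adjacency matrix of the hypercube `Q_n`: `A[x,y] = 1` iff `|x ⊕ y| = 1`. -/
def adjQ (n : ℕ) : Matrix (Fin n → ZMod 2) (Fin n → ZMod 2) ℂ :=
  Matrix.of fun x y => if wt (x + y) = 1 then 1 else 0

/-- Continuous-time quantum walk `ψ_t = exp(-itA) ψ₀`. -/
noncomputable def walk {V : Type*} [Fintype V] [DecidableEq V]
    (A : Matrix V V ℂ) (ψ0 : V → ℂ) (t : ℝ) : V → ℂ :=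
  (NormedSpace.exp ((-(t : ℂ) * Complex.I) • A)).mulVec ψ0

/-!
The characters `a ↦ (-1)^(a·x)` of `(ZMod 2)^n` form the columns of the Walsh matrix `W`, which
satisfies `W² = 2ⁿ` and diagonalises the hypercube: `A = W D W⁻¹` with `D_a = ∑ⱼ (-1)^(aⱼ)`.
Hence `exp(-itA) δ₀ (v) = 2⁻ⁿ ∑_a (-1)^(a·v) e^{-it D_a}`, and since both the character and the
eigenvalue split over coordinates, this sum factors as `∏ⱼ (e^{-it} + (-1)^(vⱼ) e^{it}) / 2`,
i.e. `ψ_t(v) = cos(t)^(n-|v|) (-i sin t)^|v|`. At `t = π/4` every factor has modulus `1/√2`.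
-/

lemma zmod_two_eq_zero_or_one (s : ZMod 2) : s = 0 ∨ s = 1 := by
  revert s; decide

lemma ZMod.sum_univ_two {M : Type*} [AddCommMonoid M] (f : ZMod 2 → M) : ∑ s, f s = f 0 + f 1 :=
  Fin.sum_univ_two f

lemma Pi.zmod_two_add_eq_zero_iff {ι : Type*} (x y : ι → ZMod 2) : x + y = 0 ↔ x = y := by
  simp only [funext_iff, Pi.add_apply, Pi.zero_apply, CharTwo.add_eq_zero]

lemma Pi.single_one_eq_single_one_iff {ι : Type*} [DecidableEq ι] (k j : ι) :
    (Pi.single k 1 : ι → ZMod 2) = Pi.single j 1 ↔ k = j :=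
  ⟨fun h => by simpa [Pi.single_apply] using congr_fun h k, fun h => h ▸ rfl⟩

noncomputable def chi (z : ZMod 2) : ℂ := if z = 0 then 1 else -1

@[simp] lemma chi_zero : chi 0 = 1 := if_pos rfl

@[simp] lemma chi_one : chi 1 = -1 := if_neg one_ne_zero

lemma chi_add (s t : ZMod 2) : chi (s + t) = chi s * chi t := by
  rcases zmod_two_eq_zero_or_one s with rfl | rfl <;> rcases zmod_two_eq_zero_or_one t with rfl | rfl <;>
    simp [CharTwo.add_self_eq_zero]

lemma chi_sum {ι : Type*} (s : Finset ι) (f : ι → ZMod 2) :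
    chi (∑ i ∈ s, f i) = ∏ i ∈ s, chi (f i) := by
  induction s using Finset.cons_induction with
  | empty => simp
  | cons i s _ ih => rw [sum_cons, prod_cons, chi_add, ih]

lemma sum_chi_mul (w : ZMod 2) : ∑ s, chi (s * w) = if w = 0 then 2 else 0 := by
  rcases zmod_two_eq_zero_or_one w with rfl | rfl <;> simp [ZMod.sum_univ_two]

lemma half_mul_exp_add_chi_mul_exp (t : ℂ) (s : ZMod 2) :
    2⁻¹ * (exp (-t * I) + chi s * exp (t * I)) = if s = 0 then cos t else -I * sin t := by
  rcases zmod_two_eq_zero_or_one s with rfl | rfl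
  · rw [chi_zero, one_mul, if_pos rfl, Complex.cos]
    ring
  · rw [chi_one, neg_one_mul, if_neg one_ne_zero, Complex.sin]
    linear_combination (exp (-t * I) - exp (t * I)) / 2 * I_sq

section Hypercube

variable {n : ℕ}

lemma dot_eq_dotProduct (a x : Fin n → ZMod 2) : dot a x = a ⬝ᵥ x := rfl

lemma dot_zero_right (a : Fin n → ZMod 2) : dot a 0 = 0 := dotProduct_zero a

lemma sum_chi_dot (w : Fin n → ZMod 2) :
    ∑ a, chi (dot a w) = if w = 0 then 2 ^ n else 0 := by
  simp only [dot, chi_sum]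
  rw [← Fintype.prod_sum fun j s => chi (s * w j)]
  simp only [sum_chi_mul]
  split_ifs with hw
  · simp [hw]
  · obtain ⟨j, hj⟩ := Function.ne_iff.mp hw
    exact prod_eq_zero (mem_univ j) (if_neg hj)

lemma chi_dot_mul_chi_dot (a x y : Fin n → ZMod 2) :
    chi (dot x a) * chi (dot a y) = chi (dot a (x + y)) := by
  simp only [dot_eq_dotProduct, dotProduct_comm x a, dotProduct_add, chi_add]

lemma wt_eq_one_iff (z : Fin n → ZMod 2) : wt z = 1 ↔ ∃ j, z = Pi.single j 1 := by
  simp only [wt, card_eq_one, Finset.ext_iff, mem_filter, mem_univ, true_and, mem_singleton,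
    funext_iff]
  refine exists_congr fun j => forall_congr' fun i => ?_
  rcases eq_or_ne i j with rfl | hij
  · simp
  · rcases zmod_two_eq_zero_or_one (z i) with h | h <;> simp [h, hij]

lemma adjQ_apply (x y : Fin n → ZMod 2) :
    adjQ n x y = ∑ j, if x + y = Pi.single j 1 then 1 else 0 := by
  rw [adjQ, of_apply]
  split_ifs with hxy
  · obtain ⟨k, hk⟩ := (wt_eq_one_iff _).mp hxy
    simp only [hk, Pi.single_one_eq_single_one_iff, sum_ite_eq, mem_univ, if_true]
  · exact (sum_eq_zero fun j _ => if_neg fun h => hxy ((wt_eq_one_iff _).mpr ⟨j, h⟩)).symm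

noncomputable def walshMatrix (n : ℕ) : Matrix (Fin n → ZMod 2) (Fin n → ZMod 2) ℂ :=
  of fun a x => chi (dot a x)

lemma walshMatrix_mul_self : walshMatrix n * walshMatrix n = (2 ^ n : ℂ) • 1 := by
  ext x y
  simp only [walshMatrix, mul_apply, of_apply, chi_dot_mul_chi_dot, sum_chi_dot,
    Pi.zmod_two_add_eq_zero_iff, Matrix.smul_apply, one_apply, smul_eq_mul, mul_ite, mul_one,
    mul_zero]

lemma walshMatrix_mul_inv_smul : walshMatrix n * ((2 ^ n : ℂ)⁻¹ • walshMatrix n) = 1 := by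
  rw [Matrix.mul_smul, walshMatrix_mul_self, smul_smul, inv_mul_cancel₀ (by simp), one_smul]

lemma walshMatrix_inv : (walshMatrix n)⁻¹ = (2 ^ n : ℂ)⁻¹ • walshMatrix n :=
  inv_eq_right_inv walshMatrix_mul_inv_smul

lemma isUnit_walshMatrix : IsUnit (walshMatrix n) :=
  (isUnit_iff_isUnit_det _).mpr (isUnit_det_of_right_inverse walshMatrix_mul_inv_smul)

noncomputable def hypercubeEigenvalue (a : Fin n → ZMod 2) : ℂ := ∑ j, chi (a j)

lemma walshMatrix_mul_diagonal_mul_walshMatrix :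
    walshMatrix n * diagonal hypercubeEigenvalue * walshMatrix n = (2 ^ n : ℂ) • adjQ n := by
  ext x y
  have hterm : ∀ a : Fin n → ZMod 2, chi (dot x a) * hypercubeEigenvalue a * chi (dot a y) =
      ∑ j, chi (dot a (x + y + Pi.single j 1)) := by
    intro a
    simp only [hypercubeEigenvalue, dot_eq_dotProduct, dotProduct_comm x a, dotProduct_add,
      dotProduct_single, mul_one, chi_add, sum_mul, mul_sum]
    exact sum_congr rfl fun j _ => by ring
  rw [mul_apply]
  simp only [mul_diagonal, walshMatrix, of_apply, hterm]
  rw [sum_comm]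
  simp only [sum_chi_dot, Pi.zmod_two_add_eq_zero_iff, Matrix.smul_apply, adjQ_apply, smul_eq_mul,
    mul_sum, mul_ite, mul_one, mul_zero]

lemma adjQ_eq_walshMatrix_conj :
    adjQ n = walshMatrix n * diagonal hypercubeEigenvalue * (walshMatrix n)⁻¹ := by
  rw [walshMatrix_inv, Matrix.mul_smul, walshMatrix_mul_diagonal_mul_walshMatrix, smul_smul,
    inv_mul_cancel₀ (by simp), one_smul]

lemma sum_chi_dot_mul_exp (v : Fin n → ZMod 2) (z : ℂ) :
    ∑ a, chi (dot v a) * exp (z * hypercubeEigenvalue a) =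
      ∏ j, (exp z + chi (v j) * exp (-z)) := by
  have hfactor : ∀ a : Fin n → ZMod 2, chi (dot v a) * exp (z * hypercubeEigenvalue a) =
      ∏ j, chi (v j * a j) * exp (z * chi (a j)) := by
    intro a
    rw [dot, hypercubeEigenvalue, chi_sum, mul_sum, exp_sum, prod_mul_distrib]
  simp only [hfactor]
  rw [← Fintype.prod_sum fun j s => chi (v j * s) * exp (z * chi s)]
  refine prod_congr rfl fun j _ => ?_
  simp [ZMod.sum_univ_two]

end Hypercube

lemma walk_eq_of_eq_conj_diagonal {V : Type*} [Fintype V] [DecidableEq V] {A P : Matrix V V ℂ}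
    {d : V → ℂ} (hP : IsUnit P) (hA : A = P * diagonal d * P⁻¹) (ψ0 : V → ℂ) (t : ℝ) :
    walk A ψ0 t = (P * diagonal (fun i => exp (-(t : ℂ) * I * d i)) * P⁻¹) *ᵥ ψ0 := by
  rw [walk, hA, ← Matrix.smul_mul, ← Matrix.mul_smul, exp_conj P _ hP, ← diagonal_smul,
    exp_diagonal, Pi.exp_def]
  simp only [Pi.smul_apply, smul_eq_mul, ← Complex.exp_eq_exp_ℂ]

lemma walk_adjQ_single_zero_apply {n : ℕ} (t : ℝ) (v : Fin n → ZMod 2) :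
    walk (adjQ n) (Pi.single 0 1) t v = ∏ j, if v j = 0 then cos t else -I * sin t := by
  rw [walk_eq_of_eq_conj_diagonal isUnit_walshMatrix adjQ_eq_walshMatrix_conj, walshMatrix_inv,
    Matrix.mul_smul, mulVec_single_one, col_apply, Matrix.smul_apply, mul_apply]
  simp only [mul_diagonal, walshMatrix, of_apply, dot_zero_right, chi_zero, mul_one, smul_eq_mul]
  rw [sum_chi_dot_mul_exp, show -(-(t : ℂ) * I) = t * I by ring, ← inv_pow, ← Fin.prod_const,
    ← prod_mul_distrib]
  simp only [half_mul_exp_add_chi_mul_exp]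

lemma norm_sq_cos_pi_div_four : ‖cos ((Real.pi / 4 : ℝ) : ℂ)‖ ^ 2 = 2⁻¹ := by
  rw [← ofReal_cos, norm_real, Real.norm_eq_abs, sq_abs, Real.cos_pi_div_four, div_pow,
    Real.sq_sqrt zero_le_two]
  norm_num

lemma norm_sq_neg_I_mul_sin_pi_div_four : ‖-I * sin ((Real.pi / 4 : ℝ) : ℂ)‖ ^ 2 = 2⁻¹ := by
  rw [norm_mul, norm_neg, norm_I, one_mul, ← ofReal_sin, norm_real, Real.norm_eq_abs, sq_abs,
    Real.sin_pi_div_four, div_pow, Real.sq_sqrt zero_le_two]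
  norm_num

theorem hypercube_uniform_mixing_general (n : ℕ) :
    ∀ v : Fin n → ZMod 2,
      ‖walk (adjQ n) (Pi.single (0 : Fin n → ZMod 2) 1)
        (Real.pi / 4) v‖ ^ 2 = 1 / 2 ^ n := by
  intro v
  have hfactor : ∀ j, ‖if v j = 0 then cos ((Real.pi / 4 : ℝ) : ℂ)
      else -I * sin ((Real.pi / 4 : ℝ) : ℂ)‖ ^ 2 = 2⁻¹ := fun j => by
    split_ifs
    exacts [norm_sq_cos_pi_div_four, norm_sq_neg_I_mul_sin_pi_div_four]
  rw [walk_adjQ_single_zero_apply, norm_prod, ← prod_pow, prod_congr rfl fun j _ => hfactor j,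
    prod_const, card_univ, Fintype.card_fin, inv_pow, one_div]

/-- The quantum walk on the hypercube `Q_n` starting at `0_n` is instantaneous
uniform mixing at time `π/4`. -/
theorem hypercube_uniform_mixing (n : ℕ) (hn : 1 ≤ n) :
    ∀ v : Fin n → ZMod 2,
      ‖walk (adjQ n) (Pi.single (0 : Fin n → ZMod 2) 1)
        (Real.pi / 4) v‖ ^ 2 = 1 / 2 ^ n :=
  hypercube_uniform_mixing_general n
end

section
/- Let $n \ge 1$, let $f: \mathbb{Z}_2^n \to \{0,1\}$ be a Boolean function, and let $\psi_t = \exp(-itB)\delta_{(0,0_n)}$ be the continuous-time quantum walk on the bunkbed graph $\mathcal{B}_n(A_f)$ with $P_t(v) = |\psi_t(v)|^2$. Then for every $t \in \mathbb{R}$, the difference between the total probability on the two decks satisfies $\sum_{x \in \mathbb{Z}_2^n} \big(P_t(0,x) - P_t(1,x)\big) = \frac{1}{2^n}\sum_{b \in \mathbb{Z}_2^n} \cos\big(2\hat f(b)\,t\big)$. -/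
open Matrix Complex Finset Kronecker

/-- Fourier transform over `(ZMod 2)^n`. -/
noncomputable def fhat {n : ℕ} (f : (Fin n → ZMod 2) → ℝ) (a : Fin n → ZMod 2) : ℝ :=
  ∑ x, f x * (-1 : ℝ) ^ (dot a x).val

/-- The `(ZMod 2)^n`-circulant matrix defined by `f`: `A_f[x,y] = f(x ⊕ y)`. -/
def circ {n : ℕ} (f : (Fin n → ZMod 2) → ℝ) :
    Matrix (Fin n → ZMod 2) (Fin n → ZMod 2) ℂ :=
  Matrix.of fun x y => ((f (x + y) : ℝ) : ℂ)

/-- The Pauli matrix `X` (0 on the diagonal, 1 off the diagonal). -/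
def Xmat : Matrix (ZMod 2) (ZMod 2) ℂ := Matrix.of fun i j => if i ≠ j then 1 else 0

/-- Adjacency matrix of the bunkbed graph `𝓑_n(A_f) = I ⊗ Q_n + X ⊗ A_f`. -/
noncomputable def bunkbed {n : ℕ} (f : (Fin n → ZMod 2) → ℝ) :
    Matrix (ZMod 2 × (Fin n → ZMod 2)) (ZMod 2 × (Fin n → ZMod 2)) ℂ :=
  (1 : Matrix (ZMod 2) (ZMod 2) ℂ) ⊗ₖ (adjQ n) + Xmat ⊗ₖ (circ f)

/-!
Write `B = N + M` with `N = I ⊗ A_{Q_n}` and `M = X ⊗ A_f`. Both `A_{Q_n}` and `A_f` are circulants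
over `ℤ₂ⁿ`, so `N` and `M` commute, while the deck signature `Z = diag(1, -1) ⊗ I` commutes with
`N` and anticommutes with `M`. Hence `e^{itB} Z e^{-itB} = e^{2itM} Z`, and the deck difference
`⟨ψ_t, Z ψ_t⟩` is the `(0, 0)` diagonal entry of `e^{2itM}`. The Walsh–Hadamard matrix
`H₂ ⊗ H_n` diagonalises `M` with eigenvalues `±f̂(b)`, so this entry is
`2⁻ⁿ ∑_b cosh (2it f̂(b)) = 2⁻ⁿ ∑_b cos (2 f̂(b) t)`.
-/

noncomputable def sgn (a : ZMod 2) : ℂ := (-1) ^ a.val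

@[simp] lemma sgn_zero : sgn 0 = 1 := by simp [sgn]

@[simp] lemma sgn_one : sgn 1 = -1 := by simp [sgn, ZMod.val_one]

lemma sgn_add (a b : ZMod 2) : sgn (a + b) = sgn a * sgn b := by
  rw [sgn, sgn, sgn, ZMod.val_add, ← neg_one_pow_eq_pow_mod_two, pow_add]

lemma sgn_sum {ι : Type*} (s : Finset ι) (a : ι → ZMod 2) :
    sgn (∑ i ∈ s, a i) = ∏ i ∈ s, sgn (a i) := by
  classical
  induction s using Finset.induction_on with
  | empty => simp
  | insert i s hi ih => rw [sum_insert hi, prod_insert hi, sgn_add, ih]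

lemma ZMod.two_eq_zero_or_one (a : ZMod 2) : a = 0 ∨ a = 1 := by decide +revert

lemma sum_zmod_two {M : Type*} [AddCommMonoid M] (g : ZMod 2 → M) : ∑ r, g r = g 0 + g 1 :=
  Fin.sum_univ_two g

lemma sum_sgn_mul (c : ZMod 2) : ∑ r, sgn (c * r) = if c = 0 then 2 else 0 := by
  rcases c.two_eq_zero_or_one with rfl | rfl <;> norm_num [sum_zmod_two]

lemma sub_eq_add_zmod_two {ι : Type*} (x y : ι → ZMod 2) : x - y = x + y := by
  rw [sub_eq_add_neg, show -y = y from funext fun i => ZMod.neg_eq_self_mod_two (y i)]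

noncomputable def pauliZ : Matrix (ZMod 2) (ZMod 2) ℂ := diagonal sgn

noncomputable def hadamard2 : Matrix (ZMod 2) (ZMod 2) ℂ := of fun r s => sgn (r * s)

lemma pauliZ_mul_self : pauliZ * pauliZ = 1 := by
  ext i j
  rcases i.two_eq_zero_or_one with rfl | rfl <;> rcases j.two_eq_zero_or_one with rfl | rfl <;>
    simp [pauliZ]

lemma pauliZ_mul_Xmat : pauliZ * Xmat = -(Xmat * pauliZ) := by
  ext i j
  rcases i.two_eq_zero_or_one with rfl | rfl <;> rcases j.two_eq_zero_or_one with rfl | rfl <;>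
    simp [pauliZ, Xmat]

lemma hadamard2_mul_self : hadamard2 * hadamard2 = (2 : ℂ) • 1 := by
  ext i j
  rcases i.two_eq_zero_or_one with rfl | rfl <;> rcases j.two_eq_zero_or_one with rfl | rfl <;>
    norm_num [hadamard2, mul_apply, sum_zmod_two]

lemma hadamard2_mul_Xmat : hadamard2 * Xmat = pauliZ * hadamard2 := by
  ext i j
  rcases i.two_eq_zero_or_one with rfl | rfl <;> rcases j.two_eq_zero_or_one with rfl | rfl <;>
    norm_num [hadamard2, pauliZ, Xmat, mul_apply, sum_zmod_two]

section Walsh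

variable {n : ℕ}

lemma dot_comm (a x : Fin n → ZMod 2) : dot a x = dot x a := by
  simp only [dot, mul_comm]

lemma dot_add_left (a b x : Fin n → ZMod 2) : dot (a + b) x = dot a x + dot b x := by
  simp only [dot, Pi.add_apply, add_mul, sum_add_distrib]

lemma dot_add_right (a x y : Fin n → ZMod 2) : dot a (x + y) = dot a x + dot a y := by
  simp only [dot, Pi.add_apply, mul_add, sum_add_distrib]

lemma sum_sgn_dot (c : Fin n → ZMod 2) :
    ∑ x, sgn (dot c x) = if c = 0 then (2 : ℂ) ^ n else 0 := by
  simp_rw [dot, sgn_sum]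
  rw [← Fintype.prod_sum (fun i r => sgn (c i * r))]
  simp_rw [sum_sgn_mul, Fintype.prod_ite_zero, prod_const, card_univ, Fintype.card_fin,
    funext_iff]
  rfl

noncomputable def walsh (n : ℕ) : Matrix (Fin n → ZMod 2) (Fin n → ZMod 2) ℂ :=
  of fun a x => sgn (dot a x)

lemma walsh_mul_self : walsh n * walsh n = (2 ^ n : ℂ) • 1 := by
  ext a c
  simp_rw [mul_apply, walsh, of_apply, dot_comm _ c, ← sgn_add, ← dot_add_left, sum_sgn_dot,
    ← sub_eq_add_zmod_two, sub_eq_zero, Matrix.smul_apply, one_apply, smul_eq_mul, mul_ite,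
    mul_one, mul_zero]

lemma walsh_mul_circulant (F : (Fin n → ZMod 2) → ℂ) :
    walsh n * circulant F = diagonal (fun b => ∑ x, sgn (dot b x) * F x) * walsh n := by
  ext b y
  rw [diagonal_mul, mul_apply, sum_mul]
  simp only [walsh, of_apply]
  refine Fintype.sum_equiv (Equiv.subRight y) _ _ fun x => ?_
  rw [circulant_apply, Equiv.subRight_apply, mul_right_comm, ← sgn_add, ← dot_add_right,
    sub_add_cancel]

lemma circ_eq_circulant (f : (Fin n → ZMod 2) → ℝ) : circ f = circulant fun x => (f x : ℂ) := by
  ext x y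
  rw [circulant_apply, sub_eq_add_zmod_two, circ, of_apply]

lemma adjQ_eq_circulant : adjQ n = circulant fun x => if wt x = 1 then 1 else 0 := by
  ext x y
  rw [circulant_apply, sub_eq_add_zmod_two, adjQ, of_apply]

lemma commute_adjQ_circ (f : (Fin n → ZMod 2) → ℝ) : Commute (adjQ n) (circ f) := by
  rw [adjQ_eq_circulant, circ_eq_circulant]
  exact circulant_mul_comm _ _

lemma ofReal_fhat (f : (Fin n → ZMod 2) → ℝ) (b : Fin n → ZMod 2) :
    (fhat f b : ℂ) = ∑ x, sgn (dot b x) * f x := by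
  simp only [fhat, sgn, ofReal_sum, ofReal_mul, ofReal_pow, ofReal_neg, ofReal_one, mul_comm]

lemma walsh_mul_circ (f : (Fin n → ZMod 2) → ℝ) :
    walsh n * circ f = diagonal (fun b => (fhat f b : ℂ)) * walsh n := by
  simp only [circ_eq_circulant, walsh_mul_circulant, ofReal_fhat]

end Walsh

section MatrixExp

variable {ι : Type*} [Fintype ι] [DecidableEq ι]

lemma Matrix.exp_eq_of_mul_self_eq_smul_one {P A : Matrix ι ι ℂ} {d : ι → ℂ} {m : ℂ}
    (hm : m ≠ 0) (hP : P * P = m • 1) (hPA : P * A = diagonal d * P) :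
    NormedSpace.exp A = m⁻¹ • (P * diagonal (fun i => Complex.exp (d i)) * P) := by
  have hleft : m⁻¹ • P * P = 1 := by
    rw [Matrix.smul_mul, hP, smul_smul, inv_mul_cancel₀ hm, one_smul]
  have hinv : P⁻¹ = m⁻¹ • P := inv_eq_left_inv hleft
  have hA : A = P⁻¹ * diagonal d * P := by
    rw [hinv, mul_assoc, ← hPA, ← mul_assoc, hleft, one_mul]
  rw [hA, exp_conj' _ _ ((isUnit_iff_isUnit_det P).mpr (isUnit_det_of_left_inverse hleft)),
    exp_diagonal, hinv, Matrix.smul_mul, Matrix.smul_mul, Pi.exp_def, ← Complex.exp_eq_exp_ℂ]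

lemma Matrix.mul_exp_of_mul_eq_neg_mul {Z M : Matrix ι ι ℂ} (hZ : Z * Z = 1)
    (hZM : Z * M = -(M * Z)) : Z * NormedSpace.exp M = NormedSpace.exp (-M) * Z := by
  have hinv : Z⁻¹ = Z := inv_eq_left_inv hZ
  have hconj : Z⁻¹ * M * Z = -M := by rw [hinv, hZM, neg_mul, mul_assoc, hZ, mul_one]
  rw [← hconj, exp_conj' _ _ ((isUnit_iff_isUnit_det Z).mpr (isUnit_det_of_left_inverse hZ)),
    hinv, mul_assoc, mul_assoc, hZ, mul_one]

lemma Matrix.exp_neg_add_mul_mul_exp_add {N M Z : Matrix ι ι ℂ} (hNM : Commute N M)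
    (hZN : Commute Z N) (hZ : Z * Z = 1) (hZM : Z * M = -(M * Z)) :
    NormedSpace.exp (-(N + M)) * Z * NormedSpace.exp (N + M)
      = NormedSpace.exp (-(M + M)) * Z := by
  open NormedSpace in
  have hZN' : Z * exp N = exp N * Z := hZN.exp_right.eq
  have hMN : exp (-M) * exp N = exp N * exp (-M) := hNM.neg_right.symm.exp.eq
  have hcancel : exp (-N) * exp N = 1 := by
    rw [← exp_add_of_commute _ _ (Commute.refl N).neg_left, neg_add_cancel, NormedSpace.exp_zero]
  have hdouble : exp (-M) * exp (-M) = exp (-(M + M)) := by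
    rw [← exp_add_of_commute _ _ (Commute.refl _), neg_add]
  rw [neg_add, exp_add_of_commute _ _ hNM.neg_left.neg_right, exp_add_of_commute _ _ hNM]
  calc exp (-N) * exp (-M) * Z * (exp N * exp M)
      = exp (-N) * (exp (-M) * exp N) * (Z * exp M) := by
        rw [mul_assoc _ Z, ← mul_assoc Z, hZN']; simp only [mul_assoc]
    _ = exp (-N) * exp N * (exp (-M) * exp (-M)) * Z := by
        rw [hMN, mul_exp_of_mul_eq_neg_mul hZ hZM]; simp only [mul_assoc]
    _ = exp (-(M + M)) * Z := by rw [hcancel, hdouble, one_mul]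

lemma Matrix.conjTranspose_mul_diagonal_mul_apply_self (E : Matrix ι ι ℂ) (d : ι → ℂ) (v : ι) :
    (Eᴴ * diagonal d * E) v v = ∑ w, d w * (‖E w v‖ ^ 2 : ℝ) := by
  rw [mul_apply]
  simp only [mul_diagonal, conjTranspose_apply, Complex.star_def]
  refine sum_congr rfl fun w _ => ?_
  rw [ofReal_pow, ← conj_mul']
  ring

end MatrixExp

lemma Commute.one_kronecker_kronecker {m l α : Type*} [Fintype m] [DecidableEq m] [Fintype l]
    [DecidableEq l] [CommSemiring α] {A B : Matrix m m α} (h : Commute A B)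
    (X : Matrix l l α) : Commute (1 ⊗ₖ A) (X ⊗ₖ B) := by
  rw [Commute, SemiconjBy, ← mul_kronecker_mul, ← mul_kronecker_mul, one_mul, mul_one, h.eq]

section Bunkbed

variable {n : ℕ}

lemma bunkbed_isHermitian (f : (Fin n → ZMod 2) → ℝ) : (bunkbed f).IsHermitian := by
  have hQ : (adjQ n)ᴴ = adjQ n := by
    ext x y
    simp [adjQ, add_comm]
  have hX : Xmatᴴ = Xmat := by
    ext r s
    simp [Xmat, eq_comm]
  have hC : (circ f)ᴴ = circ f := by
    ext x y
    simp [circ, add_comm]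
  rw [IsHermitian, bunkbed, conjTranspose_add, conjTranspose_kronecker, conjTranspose_kronecker,
    conjTranspose_one, hQ, hX, hC]

noncomputable def deckSign (n : ℕ) :
    Matrix (ZMod 2 × (Fin n → ZMod 2)) (ZMod 2 × (Fin n → ZMod 2)) ℂ :=
  pauliZ ⊗ₖ 1

lemma deckSign_eq_diagonal : deckSign n = diagonal fun p => sgn p.1 := by
  rw [deckSign, pauliZ, ← diagonal_one, diagonal_kronecker_diagonal]
  simp only [mul_one]

lemma deckSign_mul_self : deckSign n * deckSign n = 1 := by
  rw [deckSign, ← mul_kronecker_mul, pauliZ_mul_self, one_mul, one_kronecker_one]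

lemma commute_deckSign_one_kronecker (A : Matrix (Fin n → ZMod 2) (Fin n → ZMod 2) ℂ) :
    Commute (deckSign n) (1 ⊗ₖ A) := by
  rw [Commute, SemiconjBy, deckSign, ← mul_kronecker_mul, ← mul_kronecker_mul, one_mul, mul_one,
    one_mul, mul_one]

lemma deckSign_mul_Xmat_kronecker (A : Matrix (Fin n → ZMod 2) (Fin n → ZMod 2) ℂ) :
    deckSign n * (Xmat ⊗ₖ A) = -((Xmat ⊗ₖ A) * deckSign n) := by
  rw [deckSign, ← mul_kronecker_mul, ← mul_kronecker_mul, pauliZ_mul_Xmat, mul_one, one_mul]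
  ext p q
  simp [kroneckerMap_apply]

lemma ofReal_sum_deck_sub (E : Matrix (ZMod 2 × (Fin n → ZMod 2)) (ZMod 2 × (Fin n → ZMod 2)) ℂ)
    (v : ZMod 2 × (Fin n → ZMod 2)) :
    ((∑ x, (‖E (0, x) v‖ ^ 2 - ‖E (1, x) v‖ ^ 2) : ℝ) : ℂ) = (Eᴴ * deckSign n * E) v v := by
  rw [deckSign_eq_diagonal, conjTranspose_mul_diagonal_mul_apply_self, Fintype.sum_prod_type,
    sum_zmod_two]
  push_cast
  simp [sub_eq_add_neg, sum_add_distrib]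

noncomputable def bunkbedWalsh (n : ℕ) :
    Matrix (ZMod 2 × (Fin n → ZMod 2)) (ZMod 2 × (Fin n → ZMod 2)) ℂ :=
  hadamard2 ⊗ₖ walsh n

lemma bunkbedWalsh_mul_self : bunkbedWalsh n * bunkbedWalsh n = (2 ^ (n + 1) : ℂ) • 1 := by
  rw [bunkbedWalsh, ← mul_kronecker_mul, hadamard2_mul_self, walsh_mul_self, smul_kronecker,
    kronecker_smul, one_kronecker_one, smul_smul, pow_succ']

lemma bunkbedWalsh_mul_Xmat_kronecker_circ (f : (Fin n → ZMod 2) → ℝ) :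
    bunkbedWalsh n * (Xmat ⊗ₖ circ f)
      = diagonal (fun p => sgn p.1 * fhat f p.2) * bunkbedWalsh n := by
  rw [bunkbedWalsh, ← mul_kronecker_mul, hadamard2_mul_Xmat, walsh_mul_circ, mul_kronecker_mul,
    pauliZ, diagonal_kronecker_diagonal]

lemma exp_smul_Xmat_kronecker_circ_apply_zero (f : (Fin n → ZMod 2) → ℝ) (c : ℂ) :
    NormedSpace.exp (c • (Xmat ⊗ₖ circ f)) (0, 0) (0, 0)
      = (2 ^ n : ℂ)⁻¹ * ∑ b, Complex.cosh (c * fhat f b) := by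
  have hPA : bunkbedWalsh n * (c • (Xmat ⊗ₖ circ f))
      = diagonal (fun p => c * (sgn p.1 * fhat f p.2)) * bunkbedWalsh n := by
    rw [Matrix.mul_smul, bunkbedWalsh_mul_Xmat_kronecker_circ, ← Matrix.smul_mul, ← diagonal_smul]
    rfl
  have hrow : ∀ p, bunkbedWalsh n (0, 0) p = 1 := fun p => by
    simp [bunkbedWalsh, hadamard2, walsh, dot]
  have hcol : ∀ p, bunkbedWalsh n p (0, 0) = 1 := fun p => by
    simp [bunkbedWalsh, hadamard2, walsh, dot]
  rw [exp_eq_of_mul_self_eq_smul_one (pow_ne_zero _ two_ne_zero) bunkbedWalsh_mul_self hPA,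
    Matrix.smul_apply, mul_apply]
  simp only [mul_diagonal, hrow, hcol, one_mul, mul_one, Fintype.sum_prod_type, sum_zmod_two,
    sgn_zero, sgn_one, smul_eq_mul, ← sum_add_distrib, neg_one_mul, mul_neg, ← two_cosh,
    ← mul_sum]
  rw [pow_succ, mul_inv, mul_assoc, inv_mul_cancel_left₀ two_ne_zero]

lemma exp_neg_smul_bunkbed_mul_deckSign_mul_exp_smul_bunkbed (f : (Fin n → ZMod 2) → ℝ) (a : ℂ) :
    NormedSpace.exp (-(a • bunkbed f)) * deckSign n * NormedSpace.exp (a • bunkbed f)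
      = NormedSpace.exp (-(a + a) • (Xmat ⊗ₖ circ f)) * deckSign n := by
  rw [bunkbed, smul_add, exp_neg_add_mul_mul_exp_add
    (((commute_adjQ_circ f).one_kronecker_kronecker Xmat).smul_left a |>.smul_right a)
    ((commute_deckSign_one_kronecker _).smul_right a) deckSign_mul_self
    (by rw [Matrix.mul_smul, deckSign_mul_Xmat_kronecker, Matrix.smul_mul, smul_neg]),
    ← add_smul, ← neg_smul]

end Bunkbed

theorem bunkbed_deck_probability_difference_general (n : ℕ)
    (f : (Fin n → ZMod 2) → ℝ) (t : ℝ) :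
    ∑ x : Fin n → ZMod 2,
        (‖walk (bunkbed f)
            (Pi.single ((0 : ZMod 2), (0 : Fin n → ZMod 2)) 1) t
            ((0 : ZMod 2), x)‖ ^ 2
          - ‖walk (bunkbed f)
            (Pi.single ((0 : ZMod 2), (0 : Fin n → ZMod 2)) 1) t
            ((1 : ZMod 2), x)‖ ^ 2)
      = (1 / 2 ^ n) * ∑ b : Fin n → ZMod 2, Real.cos (2 * fhat f b * t) := by
  set a : ℂ := -(t : ℂ) * I with ha
  have hwalk : ∀ w, walk (bunkbed f) (Pi.single (0, 0) 1) t w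
      = NormedSpace.exp (a • bunkbed f) w (0, 0) := fun w => by
    simp [walk, ha, mulVec_single]
  have hadjoint : (NormedSpace.exp (a • bunkbed f))ᴴ = NormedSpace.exp (-(a • bunkbed f)) := by
    rw [← exp_conjTranspose, conjTranspose_smul, (bunkbed_isHermitian f).eq, ← neg_smul]
    congr 2
    simp [ha]
  apply ofReal_injective
  simp_rw [hwalk]
  rw [ofReal_sum_deck_sub, hadjoint, exp_neg_smul_bunkbed_mul_deckSign_mul_exp_smul_bunkbed,
    deckSign_eq_diagonal, mul_diagonal, sgn_zero, mul_one, exp_smul_Xmat_kronecker_circ_apply_zero,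
    one_div]
  push_cast
  refine congrArg _ (sum_congr rfl fun b _ => ?_)
  rw [← cosh_mul_I, ha]
  ring_nf

/-- For the quantum walk on the bunkbed `𝓑_n(A_f)` started at `(0, 0_n)`, the
difference of the total probabilities on the two decks equals
`2^{-n} ∑_b cos(2 f̂(b) t)`. -/
theorem bunkbed_deck_probability_difference (n : ℕ) (hn : 1 ≤ n)
    (f : (Fin n → ZMod 2) → ℝ) (hBool : ∀ x, f x = 0 ∨ f x = 1) (t : ℝ) :
    ∑ x : Fin n → ZMod 2,
        (‖walk (bunkbed f)
            (Pi.single ((0 : ZMod 2), (0 : Fin n → ZMod 2)) 1) t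
            ((0 : ZMod 2), x)‖ ^ 2
          - ‖walk (bunkbed f)
            (Pi.single ((0 : ZMod 2), (0 : Fin n → ZMod 2)) 1) t
            ((1 : ZMod 2), x)‖ ^ 2)
      = (1 / 2 ^ n) * ∑ b : Fin n → ZMod 2, Real.cos (2 * fhat f b * t) :=
  bunkbed_deck_probability_difference_general n f t
end
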